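/- arXiv:2105.05286 — 4 statements merged into one kernel-verified Lean document; each statement's English description precedes it below -/
import Mathlib

section
/- Let G be a simple graph on n vertices such that every two vertices of degree less than Δ(G) are adjacent in G. Then the number of vertices of degree Δ(G) is strictly greater than n/2. -/
/-!
Pass to the complement `Gᶜ`. The vertices of degree below `Δ` form a clique in `G`, hence an
independent set in `Gᶜ`, so all their `Gᶜ`-neighbours have degree `Δ`. Each of them has
`Gᶜ`-degree more than `n - 1 - Δ`, while each vertex of degree `Δ` has `Gᶜ`-degree exactly
`n - 1 - Δ`; counting the `Gᶜ`-edges between the two classes shows the second class is larger.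
-/

open SimpleGraph Finset

namespace SimpleGraph

variable {V : Type*} {H : SimpleGraph V} [LocallyFinite H] [DecidableRel H.Adj]

theorem card_lt_card_of_lt_degree_of_degree_le {S T : Finset V} {k : ℕ} (hT : T.Nonempty)
    (hST : ∀ u ∈ S, H.neighborFinset u ⊆ T) (hS : ∀ u ∈ S, k < H.degree u)
    (hTk : ∀ w ∈ T, H.degree w ≤ k) : #S < #T := by
  have hcount : #S * (k + 1) ≤ #T * k := by
    refine card_mul_le_card_mul H.Adj (fun u hu => ?_) (fun w hw => ?_)
    · have : T.bipartiteAbove H.Adj u = H.neighborFinset u := by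
        ext v
        simpa [mem_bipartiteAbove] using fun hv => hST u hu ((H.mem_neighborFinset u v).2 hv)
      rw [this, card_neighborFinset_eq_degree]
      exact hS u hu
    · calc #(S.bipartiteBelow H.Adj w) ≤ #(H.neighborFinset w) :=
            card_le_card fun v hv => by
              simpa [mem_bipartiteBelow, H.adj_comm] using (mem_bipartiteBelow H.Adj).1 hv |>.2
        _ ≤ k := (H.card_neighborFinset_eq_degree w).trans_le (hTk w hw)
  have := hT.card_pos
  nlinarith

end SimpleGraph

/-- If every two vertices of degree less than `Δ(G)` are adjacent in `G`, then more than half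
of the vertices of `G` have degree `Δ(G)`. -/
theorem card_maxDegree_vertices_gt_half (V : Type) [Fintype V] [DecidableEq V] [Nonempty V]
    (G : SimpleGraph V) [DecidableRel G.Adj]
    (h : ∀ u v : V, u ≠ v → G.degree u < G.maxDegree → G.degree v < G.maxDegree → G.Adj u v) :
    ((Finset.univ.filter fun v : V => G.degree v = G.maxDegree).card : ℝ) >
      (Fintype.card V : ℝ) / 2 := by
  set T := Finset.univ.filter fun v : V => G.degree v = G.maxDegree
  have mem_T : ∀ v, v ∈ T ↔ G.degree v = G.maxDegree := by simp [T]
  have lt_of_not_mem_T : ∀ v ∉ T, G.degree v < G.maxDegree := fun v hv =>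
    (G.degree_le_maxDegree v).lt_of_ne ((mem_T v).not.1 hv)
  have hΔ := G.maxDegree_lt_card_verts
  have hTc : #Tᶜ < #T := by
    refine Gᶜ.card_lt_card_of_lt_degree_of_degree_le (k := Fintype.card V - 1 - G.maxDegree)
      ?_ (fun u hu v hv => ?_) (fun u hu => ?_) (fun w hw => ?_)
    · obtain ⟨w, hw⟩ := G.exists_maximal_degree_vertex
      exact ⟨w, (mem_T w).2 hw.symm⟩
    · rw [mem_neighborFinset, compl_adj] at hv
      by_contra hvT
      exact hv.2 (h u v hv.1 (lt_of_not_mem_T u (mem_compl.1 hu)) (lt_of_not_mem_T v hvT))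
    · have := lt_of_not_mem_T u (mem_compl.1 hu)
      rw [degree_compl]
      omega
    · rw [degree_compl, (mem_T w).1 hw]
  rw [card_compl] at hTc
  rw [gt_iff_lt, div_lt_iff₀ two_pos]
  exact_mod_cast (by omega : Fintype.card V < #T * 2)
end

section
/- Let G be a simple graph of even order n with δ(G) > n/2. If G has at least two vertices of minimum degree, then G contains no Δ(G)-overfull subgraph. -/
open SimpleGraph

/-- `G` contains a `D`-overfull subgraph: a subgraph `H` with maximum degree `D` (all degrees
at most `D`, some degree equal to `D`) satisfying `|E(H)| > D * ⌊|V(H)|/2⌋`. -/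
def HasDeltaOverfull {V : Type} (G : SimpleGraph V) (D : ℕ) : Prop :=
  ∃ H : G.Subgraph,
    H.edgeSet.ncard > D * (H.verts.ncard / 2) ∧
    (∀ v, (H.neighborSet v).ncard ≤ D) ∧ (∃ v, (H.neighborSet v).ncard = D)

/-!
Let `H` be a `Δ`-overfull subgraph with vertex set `W`, `|W| = m`. Then `m` is odd and the
deficiency `∑_{v ∈ W} (Δ - d_H(v))` is at most `Δ - 2`. Every `v ∈ W` has deficiency at least
`|N_G(v) \ W| + (Δ - d_G(v))`, so in particular the number `e` of edges between `W` and its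
complement is at most `Δ - 2`. The `k = n - m` outside vertices (`k` is odd) each have at least
`δ + 1 - k` neighbours in `W`, so `k (δ + 1 - k) ≤ e`. If `k = 1` then `e ≥ δ`, and one of the two
minimum-degree vertices lies in `W`, adding `Δ - δ` to the deficiency: a total of `Δ`. If `k ≥ 3`,
then `δ > n / 2` and `Δ < m` already make `k (δ + 1 - k) > Δ - 2`.
-/

open Finset

lemma Nat.add_sq_lt_mul_add_one_add_two {k n δ Δ : ℕ} (hk : 3 ≤ k) (hδ : n + 2 ≤ 2 * δ)
    (hδΔ : δ ≤ Δ) (hΔ : Δ + k < n) : Δ + k ^ 2 < k * (δ + 1) + 2 := by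
  have : 2 * k + 4 ≤ n := by omega
  nlinarith

lemma Nat.odd_and_mul_add_two_le_of_mul_half_lt {m D e : ℕ} (hover : D * (m / 2) < e)
    (he : 2 * e ≤ m * D) : Odd m ∧ m * D + 2 ≤ 2 * e + D := by
  rcases Nat.even_or_odd' m with ⟨s, rfl | rfl⟩
  · rw [Nat.mul_div_cancel_left s two_pos] at hover
    nlinarith
  · refine ⟨odd_two_mul_add_one s, ?_⟩
    rw [show (2 * s + 1) / 2 = s by omega] at hover
    nlinarith

namespace SimpleGraph

variable {V : Type*} {G : SimpleGraph V}

namespace Subgraph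

lemma ncard_neighborSet_lt_ncard_verts [Finite V] (H : G.Subgraph) {v : V} (hv : v ∈ H.verts) :
    (H.neighborSet v).ncard < H.verts.ncard :=
  Set.ncard_lt_ncard ((Set.ssubset_iff_of_subset (H.neighborSet_subset_verts v)).2
    ⟨v, hv, fun h => (H.adj_sub h).ne rfl⟩)

lemma sum_ncard_neighborSet [Fintype V] (H : G.Subgraph) :
    ∑ v, (H.neighborSet v).ncard = 2 * H.edgeSet.ncard := by
  classical
  rw [← H.edgeSet_spanningCoe, Set.ncard_eq_toFinset_card', ← edgeFinset,
    ← sum_degrees_eq_twice_card_edges]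
  refine sum_congr rfl fun v _ => ?_
  rw [Subgraph.degree_spanningCoe, ← Subgraph.finset_card_neighborSet_eq_degree,
    Set.ncard_eq_toFinset_card']

lemma sum_ncard_neighborSet_of_verts_subset [Fintype V] (H : G.Subgraph) {W : Finset V}
    (hW : H.verts ⊆ W) : ∑ v ∈ W, (H.neighborSet v).ncard = 2 * H.edgeSet.ncard := by
  rw [← H.sum_ncard_neighborSet]
  refine sum_subset (subset_univ W) fun v _ hv => ?_
  rw [Set.ncard_eq_zero]
  exact Set.eq_empty_of_forall_notMem fun w hw => hv (hW (H.edge_vert hw))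

lemma odd_card_and_sum_tsub_add_two_le_of_overfull [Fintype V] (H : G.Subgraph) {W : Finset V}
    (hW : ↑W = H.verts) {D : ℕ} (hD : ∀ v, (H.neighborSet v).ncard ≤ D)
    (hover : D * (H.verts.ncard / 2) < H.edgeSet.ncard) :
    Odd #W ∧ ∑ v ∈ W, (D - (H.neighborSet v).ncard) + 2 ≤ D := by
  rw [← hW, Set.ncard_coe_finset] at hover
  have hsum := H.sum_ncard_neighborSet_of_verts_subset hW.ge
  have hle : 2 * H.edgeSet.ncard ≤ #W * D := by
    rw [← hsum, ← smul_eq_mul]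
    exact sum_le_card_nsmul _ _ _ fun v _ => hD v
  obtain ⟨hodd, hbound⟩ := Nat.odd_and_mul_add_two_le_of_mul_half_lt hover hle
  refine ⟨hodd, ?_⟩
  rw [sum_tsub_distrib _ fun v _ => hD v, sum_const, smul_eq_mul, hsum]
  omega

lemma ncard_neighborSet_add_card_sdiff_le_degree [Fintype V] [DecidableEq V] [DecidableRel G.Adj]
    (H : G.Subgraph) {W : Finset V} (hW : H.verts ⊆ W) (v : V) :
    (H.neighborSet v).ncard + #(G.neighborFinset v \ W) ≤ G.degree v := by
  have hsub : H.neighborSet v ⊆ ↑(G.neighborFinset v ∩ W) := fun w hw => by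
    simpa using ⟨H.adj_sub hw, hW (H.edge_vert hw.symm)⟩
  have hinter := Set.ncard_le_ncard hsub
  rw [Set.ncard_coe_finset] at hinter
  have hsplit := card_inter_add_card_sdiff (G.neighborFinset v) W
  rw [card_neighborFinset_eq_degree] at hsplit
  omega

lemma sum_card_sdiff_add_sum_tsub_degree_add_two_le_of_overfull [Fintype V] [DecidableEq V]
    [DecidableRel G.Adj] (H : G.Subgraph) {W : Finset V} (hW : ↑W = H.verts)
    (hD : ∀ v, (H.neighborSet v).ncard ≤ G.maxDegree)
    (hover : G.maxDegree * (H.verts.ncard / 2) < H.edgeSet.ncard) :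
    ∑ v ∈ W, #(G.neighborFinset v \ W) + ∑ v ∈ W, (G.maxDegree - G.degree v) + 2
      ≤ G.maxDegree := by
  refine le_trans ?_ (H.odd_card_and_sum_tsub_add_two_le_of_overfull hW hD hover).2
  rw [← sum_add_distrib]
  gcongr with v
  have hv := H.ncard_neighborSet_add_card_sdiff_le_degree hW.ge v
  have hΔ := G.degree_le_maxDegree v
  omega

end Subgraph

variable [Fintype V] [DecidableEq V] [DecidableRel G.Adj]

lemma sum_card_neighborFinset_sdiff_eq_sum_compl (W : Finset V) :
    ∑ v ∈ W, #(G.neighborFinset v \ W) = ∑ u ∈ Wᶜ, #(G.neighborFinset u ∩ W) := by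
  convert sum_card_bipartiteAbove_eq_sum_card_bipartiteBelow (s := W) (t := Wᶜ) (r := G.Adj)
    using 3 with v _ u _
  · ext; simp [bipartiteAbove, and_comm]
  · ext; simp [bipartiteBelow, adj_comm, and_comm]

lemma minDegree_add_one_le_card_inter_add_card_compl {W : Finset V} {u : V} (hu : u ∈ Wᶜ) :
    G.minDegree + 1 ≤ #(G.neighborFinset u ∩ W) + #Wᶜ := by
  have hsub : G.neighborFinset u \ W ⊆ Wᶜ.erase u := fun w hw => by
    simp only [mem_sdiff, mem_neighborFinset] at hw
    simpa using ⟨hw.1.ne', hw.2⟩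
  have hout := card_le_card hsub
  rw [card_erase_of_mem hu] at hout
  have hδ := G.minDegree_le_degree u
  have hsplit := card_inter_add_card_sdiff (G.neighborFinset u) W
  rw [card_neighborFinset_eq_degree] at hsplit
  have hpos : 0 < #Wᶜ := card_pos.2 ⟨u, hu⟩
  omega

lemma card_compl_mul_minDegree_add_one_le (W : Finset V) :
    #Wᶜ * (G.minDegree + 1) ≤ ∑ v ∈ W, #(G.neighborFinset v \ W) + #Wᶜ ^ 2 := by
  rw [sum_card_neighborFinset_sdiff_eq_sum_compl, sq, ← smul_eq_mul, ← sum_const, ← smul_eq_mul,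
    ← sum_const, ← sum_add_distrib]
  exact sum_le_sum fun u hu => minDegree_add_one_le_card_inter_add_card_compl hu

end SimpleGraph

theorem no_overfull_of_two_min_degree_vertices_general (V : Type) [Fintype V]
    (G : SimpleGraph V) [DecidableRel G.Adj]
    (heven : Even (Fintype.card V))
    (hδ : (Fintype.card V : ℝ) / 2 < (G.minDegree : ℝ))
    (h2 : 2 ≤ (Finset.univ.filter fun v : V => G.degree v = G.minDegree).card) :
    ¬ HasDeltaOverfull G G.maxDegree := by
  classical
  rintro ⟨H, hover, hD, v₀, hv₀⟩
  obtain ⟨W, hW⟩ := H.verts.toFinite.exists_finset_coe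
  have hodd := (H.odd_card_and_sum_tsub_add_two_le_of_overfull hW hD hover).1
  have hdef := H.sum_card_sdiff_add_sum_tsub_degree_add_two_le_of_overfull hW hD hover
  have hbdry := G.card_compl_mul_minDegree_add_one_le W
  have hΔW : G.maxDegree < #W := by
    obtain ⟨u, hu⟩ := Set.nonempty_of_ncard_ne_zero (s := H.neighborSet v₀) (by omega)
    simpa [hv₀, ← hW] using H.ncard_neighborSet_lt_ncard_verts (H.edge_vert hu)
  have hn := card_compl_add_card W
  have hδn : Fintype.card V + 2 ≤ 2 * G.minDegree := by
    have : Fintype.card V < 2 * G.minDegree := by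
      exact_mod_cast (by linarith : (Fintype.card V : ℝ) < 2 * G.minDegree)
    obtain ⟨t, ht⟩ := heven
    omega
  obtain hk | hk : #Wᶜ = 1 ∨ 3 ≤ #Wᶜ := by
    obtain ⟨t, ht⟩ := heven; obtain ⟨s, hs⟩ := hodd; omega
  · obtain ⟨w, hw, hwW⟩ := exists_mem_notMem_of_card_lt_card (s := Wᶜ)
      (t := univ.filter fun v => G.degree v = G.minDegree) (by omega)
    simp only [mem_filter, mem_univ, true_and] at hw
    have hwdef := single_le_sum (f := fun v => G.maxDegree - G.degree v) (by simp)
      (by simpa using hwW)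
    simp only [hw, hk] at hwdef hbdry
    omega
  · have hlarge := Nat.add_sq_lt_mul_add_one_add_two hk hδn G.minDegree_le_maxDegree (by omega)
    omega

/-- A graph of even order `n` with `δ(G) > n/2` and at least two vertices of minimum degree
contains no `Δ(G)`-overfull subgraph. -/
theorem no_overfull_of_two_min_degree_vertices (V : Type) [Fintype V] [DecidableEq V]
    (G : SimpleGraph V) [DecidableRel G.Adj]
    (heven : Even (Fintype.card V))
    (hδ : (Fintype.card V : ℝ) / 2 < (G.minDegree : ℝ))
    (h2 : 2 ≤ (Finset.univ.filter fun v : V => G.degree v = G.minDegree).card) :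
    ¬ HasDeltaOverfull G G.maxDegree :=
  no_overfull_of_two_min_degree_vertices_general V G heven hδ h2
end

section
/- Let G be a bipartite simple graph with bipartition (X, Y) where |X| = |Y| = n, and suppose δ(G) = t for some integer t with 1 ≤ t ≤ n−1. If all vertices of G, except at most t/2 of them, have degree at least (n + t/2)/2 in G, then G has a perfect matching. -/
/-!
By Hall's theorem it suffices to rule out a set `S ⊆ X` (or symmetrically `S ⊆ Y`) with
`|N(S)| < |S|`. For such `S`, every vertex of `S` has degree at most `|N(S)|` and every vertex of
`Y \ N(S)` has degree at most `|X \ S| < |Y \ N(S)|`. Since all degrees are at least `t`, both `S`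
and `Y \ N(S)` have more than `t` vertices, so each contains a vertex of degree at least `n / 2`,
as at most `t` vertices have smaller degree. Adding the two bounds gives
`n ≤ |N(S)| + n - |S| < n`.
-/

namespace SimpleGraph

section

variable {V : Type*} [Finite V] {G : SimpleGraph V} {X Y : Set V}

theorem IsBipartiteWith.forall_ncard_le_of_forall_subset (h : G.IsBipartiteWith X Y)
    (hXY : X ∪ Y = Set.univ)
    (hallX : ∀ s ⊆ X, s.ncard ≤ (⋃ x ∈ s, G.neighborSet x).ncard)
    (hallY : ∀ s ⊆ Y, s.ncard ≤ (⋃ x ∈ s, G.neighborSet x).ncard) (s : Set V) :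
    s.ncard ≤ (⋃ x ∈ s, G.neighborSet x).ncard := by
  have hsX : s ∩ X ⊆ X := Set.inter_subset_right
  have hsY : s \ X ⊆ Y := fun v hv => (hXY ▸ Set.mem_univ v).resolve_left hv.2
  have hNX : (⋃ x ∈ s ∩ X, G.neighborSet x) ⊆ Y :=
    Set.iUnion₂_subset fun x hx => isBipartiteWith_neighborSet_subset h (hsX hx)
  have hNY : (⋃ x ∈ s \ X, G.neighborSet x) ⊆ X :=
    Set.iUnion₂_subset fun x hx => isBipartiteWith_neighborSet_subset h.symm (hsY hx)
  calc s.ncard = (s ∩ X).ncard + (s \ X).ncard :=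
        (Set.ncard_inter_add_ncard_sdiff_eq_ncard s X).symm
    _ ≤ (⋃ x ∈ s ∩ X, G.neighborSet x).ncard + (⋃ x ∈ s \ X, G.neighborSet x).ncard :=
      add_le_add (hallX _ hsX) (hallY _ hsY)
    _ = ((⋃ x ∈ s ∩ X, G.neighborSet x) ∪ ⋃ x ∈ s \ X, G.neighborSet x).ncard :=
      (Set.ncard_union_eq (h.disjoint.symm.mono hNX hNY)).symm
    _ ≤ (⋃ x ∈ s, G.neighborSet x).ncard := by
      refine Set.ncard_le_ncard (Set.union_subset ?_ ?_)
      · exact Set.biUnion_mono Set.inter_subset_left fun _ _ => le_rfl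
      · exact Set.biUnion_mono Set.sdiff_subset fun _ _ => le_rfl

end

section

variable {V : Type*} [Fintype V] {G : SimpleGraph V} [DecidableRel G.Adj] {X Y s : Set V}

theorem degree_le_ncard_biUnion_neighborSet {x : V} (hx : x ∈ s) :
    G.degree x ≤ (⋃ x ∈ s, G.neighborSet x).ncard := by
  rw [← card_neighborFinset_eq_degree, ← Set.ncard_coe_finset, coe_neighborFinset]
  exact Set.ncard_le_ncard (Set.subset_biUnion_of_mem hx)

theorem IsBipartiteWith.degree_le_ncard_sdiff (h : G.IsBipartiteWith X Y) {y : V} (hy : y ∈ Y)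
    (hyN : y ∉ ⋃ x ∈ s, G.neighborSet x) : G.degree y ≤ (X \ s).ncard := by
  rw [← card_neighborFinset_eq_degree, ← Set.ncard_coe_finset, coe_neighborFinset]
  refine Set.ncard_le_ncard fun x hx => ⟨isBipartiteWith_neighborSet_subset h.symm hy hx, ?_⟩
  exact fun hxs => hyN (Set.mem_biUnion hxs (G.adj_symm hx))

theorem IsBipartiteWith.ncard_le_ncard_biUnion_neighborSet (h : G.IsBipartiteWith X Y)
    {n t : ℕ} (hX : X.ncard = n) (hY : Y.ncard = n) (hδ : ∀ v, t ≤ G.degree v)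
    (hlow : {v | 2 * G.degree v < n}.ncard ≤ t) (hs : s ⊆ X) :
    s.ncard ≤ (⋃ x ∈ s, G.neighborSet x).ncard := by
  set N := ⋃ x ∈ s, G.neighborSet x
  by_contra! hN
  have hNY : N ⊆ Y := Set.iUnion₂_subset fun x hx => isBipartiteWith_neighborSet_subset h (hs hx)
  have hsX : s.ncard ≤ n := hX ▸ Set.ncard_le_ncard hs
  have hT : (Y \ N).ncard = n - N.ncard := by rw [Set.ncard_sdiff hNY, hY]
  have hXs : (X \ s).ncard = n - s.ncard := hX ▸ Set.ncard_sdiff hs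
  obtain ⟨x₀, hx₀⟩ := Set.nonempty_of_ncard_ne_zero (by omega : s.ncard ≠ 0)
  obtain ⟨y₀, hy₀⟩ := Set.nonempty_of_ncard_ne_zero (by omega : (Y \ N).ncard ≠ 0)
  have hx₀deg : G.degree x₀ ≤ N.ncard := degree_le_ncard_biUnion_neighborSet hx₀
  have hy₀deg := h.degree_le_ncard_sdiff hy₀.1 hy₀.2
  obtain ⟨x, hx, hxhigh⟩ := Set.exists_mem_notMem_of_ncard_lt_ncard
    (s := {v | 2 * G.degree v < n}) (t := s) (by have := hδ x₀; omega)
  obtain ⟨y, hy, hyhigh⟩ := Set.exists_mem_notMem_of_ncard_lt_ncard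
    (s := {v | 2 * G.degree v < n}) (t := Y \ N) (by have := hδ y₀; omega)
  have hxdeg : G.degree x ≤ N.ncard := degree_le_ncard_biUnion_neighborSet hx
  have hydeg := h.degree_le_ncard_sdiff hy.1 hy.2
  simp only [Set.mem_ofPred_eq, not_lt] at hxhigh hyhigh
  omega

theorem IsBipartiteWith.exists_isPerfectMatching_of_ncard_lowDegree_le
    (h : G.IsBipartiteWith X Y) (hXY : X ∪ Y = Set.univ) {n t : ℕ} (hX : X.ncard = n)
    (hY : Y.ncard = n) (hδ : ∀ v, t ≤ G.degree v) (hlow : {v | 2 * G.degree v < n}.ncard ≤ t) :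
    ∃ M : G.Subgraph, M.IsPerfectMatching :=
  exists_isPerfectMatching_of_forall_ncard_le h <| h.forall_ncard_le_of_forall_subset hXY
    (fun _ => h.ncard_le_ncard_biUnion_neighborSet hX hY hδ hlow)
    (fun _ => h.symm.ncard_le_ncard_biUnion_neighborSet hY hX hδ hlow)

end

end SimpleGraph

theorem bipartite_perfect_matching_general (V : Type) [Fintype V] [DecidableEq V]
    (G : SimpleGraph V) [DecidableRel G.Adj]
    (X Y : Finset V) (n t : ℕ)
    (hdisj : Disjoint X Y) (hunion : X ∪ Y = Finset.univ)
    (hX : X.card = n) (hY : Y.card = n)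
    (hbip : ∀ u v : V, G.Adj u v → (u ∈ X ∧ v ∈ Y) ∨ (u ∈ Y ∧ v ∈ X))
    (hδ : G.minDegree = t)
    (hsmall : (({v : V | (G.degree v : ℝ) < ((n : ℝ) + (t : ℝ) / 2) / 2}).ncard : ℝ) ≤
      (t : ℝ) / 2) :
    ∃ M : G.Subgraph, M.IsPerfectMatching := by
  have hbipartite : G.IsBipartiteWith X Y := ⟨Finset.disjoint_coe.mpr hdisj, fun u v => hbip u v⟩
  have hcover : (X ∪ Y : Set V) = Set.univ := by
    rw [← Finset.coe_union, hunion, Finset.coe_univ]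
  have hsub : {v | 2 * G.degree v < n} ⊆
      {v : V | (G.degree v : ℝ) < ((n : ℝ) + (t : ℝ) / 2) / 2} := fun v hv => by
    have : (2 * G.degree v : ℝ) < n := by exact_mod_cast hv
    change (G.degree v : ℝ) < _
    linarith [(t.cast_nonneg : (0 : ℝ) ≤ t)]
  have hlow : ({v | 2 * G.degree v < n}.ncard : ℝ) ≤ t :=
    calc ({v | 2 * G.degree v < n}.ncard : ℝ)
        ≤ ({v : V | (G.degree v : ℝ) < ((n : ℝ) + (t : ℝ) / 2) / 2}).ncard := by
          exact_mod_cast Set.ncard_le_ncard hsub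
      _ ≤ t / 2 := hsmall
      _ ≤ t := half_le_self t.cast_nonneg
  exact hbipartite.exists_isPerfectMatching_of_ncard_lowDegree_le hcover
    ((Set.ncard_coe_finset X).trans hX) ((Set.ncard_coe_finset Y).trans hY)
    (fun v => hδ ▸ G.minDegree_le_degree v) (by exact_mod_cast hlow)

/-- Let `G` be a bipartite graph with bipartition `(X, Y)`, `|X| = |Y| = n`, and minimum
degree `t` with `1 ≤ t ≤ n − 1`. If all vertices of `G`, except at most `t/2` of them, have
degree at least `(n + t/2)/2`, then `G` has a perfect matching. -/
theorem bipartite_perfect_matching (V : Type) [Fintype V] [DecidableEq V]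
    (G : SimpleGraph V) [DecidableRel G.Adj]
    (X Y : Finset V) (n t : ℕ)
    (hdisj : Disjoint X Y) (hunion : X ∪ Y = Finset.univ)
    (hX : X.card = n) (hY : Y.card = n)
    (hbip : ∀ u v : V, G.Adj u v → (u ∈ X ∧ v ∈ Y) ∨ (u ∈ Y ∧ v ∈ X))
    (ht1 : 1 ≤ t) (ht2 : t + 1 ≤ n)
    (hδ : G.minDegree = t)
    (hsmall : (({v : V | (G.degree v : ℝ) < ((n : ℝ) + (t : ℝ) / 2) / 2}).ncard : ℝ) ≤
      (t : ℝ) / 2) :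
    ∃ M : G.Subgraph, M.IsPerfectMatching :=
  bipartite_perfect_matching_general V G X Y n t hdisj hunion hX hY hbip hδ hsmall
end

section
/- There exist constants such that for all 0 < 1/n₀ ≪ ε < 1 the following holds: let G be a simple graph on 2n ≥ n₀ vertices with δ(G) ≥ (1+ε)n, and let {a₁b₁, …, a_tb_t} be a set of t ≤ εn/4 pairwise disjoint pairs of vertices of G (a matching in the complete graph on V(G)). Then there exist vertex-disjoint paths P₁, …, P_t in G such that the vertex sets of the P_i together cover all of V(G) and each P_i joins a_i to b_i. -/
/-!
Give each of the first `t - 1` pairs a private common neighbour `cᵢ` outside all the pairs (two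
vertices of degree at least `(1 + ε)n` have at least `2εn ≥ 8t` common neighbours, so Hall's
condition holds) and use the paths `aᵢ cᵢ bᵢ`. Deleting these at most `3t` vertices leaves a graph
on `N` vertices with minimum degree at least `(N + 1) / 2`; such a graph is Hamilton-connected,
and a Hamilton path from `a_t` to `b_t` in it covers the remaining vertices.

Hamilton-connectedness is proved by Pósa's rotation–extension technique. A path ending at `a` is
grown at its free end `x`. When every neighbour of `x` other than `b` already lies on the path,
the at least `δ - 1` vertices preceding these neighbours (on the side of `x`) and the `δ`
neighbours of the vertex `z` to be added cannot be disjoint, as `2δ > N`; reversing the segment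
from `x` to a common vertex makes it the new free end, now adjacent to `z`. The last vertex
added this way is `b`.
-/

open Finset

theorem List.IsChain.reverse_append {α : Type*} {R : α → α → Prop} [Std.Symm R]
    {p q : List α} (h : (p ++ q).IsChain R) (hpq : ∀ x ∈ p.head?, ∀ y ∈ q.head?, R x y) :
    (p.reverse ++ q).IsChain R := by
  obtain ⟨hp, hq, -⟩ := List.isChain_append.1 h
  refine List.isChain_append.2 ⟨List.isChain_reverse.2 (hp.imp fun _ _ h ↦ symm h), hq, ?_⟩
  simpa using hpq

namespace SimpleGraph

variable {V : Type*} {G : SimpleGraph V}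

lemma exists_walk_support_eq {l : List V} (hc : l.IsChain G.Adj) {u v : V}
    (hu : l.head? = some u) (hv : l.getLast? = some v) : ∃ p : G.Walk u v, p.support = l := by
  have hne : l ≠ [] := by rintro rfl; cases hu
  exact ⟨(Walk.ofSupport l hne hc).copy ((List.head_eq_iff_head?_eq_some hne).2 hu)
    ((List.getLast_eq_iff_getLast?_eq_some hne).2 hv), by simp⟩

section Finite

variable [Fintype V] [DecidableEq V] [DecidableRel G.Adj]

lemma card_add_degree_lt_card {s : Finset V} {z : V} (hz : z ∉ s)
    (hs : Disjoint s (G.neighborFinset z)) : #s + G.degree z < Fintype.card V := by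
  have := card_le_univ (insert z (s ∪ G.neighborFinset z))
  rwa [card_insert_of_notMem (by simp [hz]), card_union_of_disjoint hs,
    card_neighborFinset_eq_degree] at this

lemma exists_adj_getElem_adj_getElem_succ {l : List V} (hn : l.Nodup) {x z b : V}
    (hxl : l.head? = some x) (hz : z ∉ l) (hx : ∀ w, G.Adj x w → w ≠ b → w ∈ l)
    (hdeg : Fintype.card V + 1 ≤ G.degree x + G.degree z) :
    ∃ i, ∃ h : i + 1 < l.length, G.Adj z l[i] ∧ G.Adj x l[i + 1] := by
  by_contra! hnone
  -- `l.getD · x` reads `l` with the junk value `x`, which is not a neighbour of `x`.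
  set I := {i ∈ range l.length | G.Adj x (l.getD (i + 1) x)}
  have hI : ∀ i ∈ I, i + 1 < l.length := fun i hi ↦ by
    by_contra! h
    rw [mem_filter, List.getD_eq_default _ _ h] at hi
    exact G.irrefl hi.2
  have hIx : (G.neighborFinset x).erase b ⊆ I.image (fun i ↦ l.getD (i + 1) x) := by
    intro w hw
    obtain ⟨hwb, hxw⟩ := mem_erase.1 hw
    rw [mem_neighborFinset] at hxw
    obtain ⟨j, hj, rfl⟩ := List.getElem_of_mem (hx w hxw hwb)
    obtain ⟨i, rfl⟩ : ∃ i, j = i + 1 := by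
      refine Nat.exists_eq_add_one.2 (Nat.pos_of_ne_zero fun h0 ↦ G.irrefl (v := x) ?_)
      subst h0
      rwa [List.getElem_zero, (List.head_eq_iff_head?_eq_some _).2 hxl] at hxw
    rw [← List.getD_eq_getElem _ x hj] at hxw ⊢
    exact mem_image_of_mem _ (mem_filter.2 ⟨mem_range.2 (Nat.lt_of_succ_lt hj), hxw⟩)
  set T := I.image fun i ↦ l.getD i x
  have hT : #T = #I := by
    refine card_image_of_injOn fun i hi j hj hij ↦ ?_
    simp only [List.getD_eq_getElem _ _ (Nat.lt_of_succ_lt (hI i hi)),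
      List.getD_eq_getElem _ _ (Nat.lt_of_succ_lt (hI j hj))] at hij
    exact hn.getElem_inj_iff.1 hij
  have hzT : z ∉ T := by
    rw [mem_image]
    rintro ⟨i, hi, rfl⟩
    exact hz (List.getD_eq_getElem _ _ (Nat.lt_of_succ_lt (hI i hi)) ▸ List.getElem_mem _)
  have hTz : Disjoint T (G.neighborFinset z) := by
    refine Finset.disjoint_left.2 fun w hw hzw ↦ ?_
    obtain ⟨i, hi, rfl⟩ := mem_image.1 hw
    have hxi := (mem_filter.1 hi).2
    rw [mem_neighborFinset, List.getD_eq_getElem _ _ (Nat.lt_of_succ_lt (hI i hi))] at hzw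
    rw [List.getD_eq_getElem _ _ (hI i hi)] at hxi
    exact hnone i (hI i hi) hzw hxi
  have := card_add_degree_lt_card hzT hTz
  have := (card_le_card hIx).trans card_image_le
  have := pred_card_le_card_erase (s := G.neighborFinset x) (a := b)
  rw [card_neighborFinset_eq_degree] at this
  omega

/-- Pósa rotation: reversing the segment `l[0], …, l[i]` makes `l[i]` the first vertex. -/
lemma exists_perm_isChain_cons {l : List V} (hc : l.IsChain G.Adj) (hn : l.Nodup) {x z b : V}
    (hxl : l.head? = some x) (hz : z ∉ l) (hx : ∀ w, G.Adj x w → w ≠ b → w ∈ l)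
    (hdeg : Fintype.card V + 1 ≤ G.degree x + G.degree z) :
    ∃ l', l'.Perm l ∧ (z :: l').IsChain G.Adj ∧ l'.getLast? = l.getLast? := by
  obtain ⟨i, hi, hzi, hxi⟩ := exists_adj_getElem_adj_getElem_succ hn hxl hz hx hdeg
  have : Std.Symm G.Adj := G.symm
  have hne : l ≠ [] := List.ne_nil_of_length_pos (by omega)
  have hdrop : (l.drop (i + 1)).head? = some l[i + 1] := by simp
  have htake : (l.take (i + 1)).head? = some x := by simpa [List.head?_take] using hxl
  have htake' : (l.take (i + 1)).getLast? = some l[i] := by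
    rw [List.getLast?_take]; simp [List.getElem?_eq_getElem (Nat.lt_of_succ_lt hi)]
  refine ⟨(l.take (i + 1)).reverse ++ l.drop (i + 1), ?_, ?_, ?_⟩
  · simpa using (List.reverse_perm (l.take (i + 1))).append_right (l.drop (i + 1))
  · refine List.isChain_cons.2 ⟨?_, ?_⟩
    · rw [List.head?_append_of_ne_nil _ (by simpa using hne), List.head?_reverse, htake']
      simpa using hzi
    · refine List.IsChain.reverse_append (by rwa [List.take_append_drop]) ?_
      rw [htake, hdrop]
      simpa using hxi
  · rw [List.getLast?_append_of_ne_nil _ (by simpa using hi), List.getLast?_drop,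
      if_neg (by omega)]

variable {k : ℕ}

lemma exists_notMem_perm_isChain_cons (hdeg : ∀ v, k ≤ G.degree v)
    (hcard : Fintype.card V + 1 ≤ 2 * k) {l : List V} (hc : l.IsChain G.Adj) (hn : l.Nodup)
    {x b u : V} (hxl : l.head? = some x) (hu : u ∉ l) (hub : u ≠ b) :
    ∃ w ∉ l, w ≠ b ∧ ∃ l', l'.Perm l ∧ (w :: l').IsChain G.Adj ∧ l'.getLast? = l.getLast? := by
  by_cases hfree : ∃ w, G.Adj x w ∧ w ∉ l ∧ w ≠ b
  · obtain ⟨w, hxw, hw, hwb⟩ := hfree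
    exact ⟨w, hw, hwb, l, .refl l, List.isChain_cons.2 ⟨by simpa [hxl] using hxw.symm, hc⟩, rfl⟩
  · push Not at hfree
    exact ⟨u, hu, hub, exists_perm_isChain_cons hc hn hxl hu
      (fun w hxw hwb ↦ by_contra fun hw ↦ hwb (hfree w hxw hw)) (by linarith [hdeg x, hdeg u])⟩

lemma exists_isChain_mem_iff_ne (hdeg : ∀ v, k ≤ G.degree v)
    (hcard : Fintype.card V + 1 ≤ 2 * k) {a b : V} (l : List V) (hc : l.IsChain G.Adj)
    (hn : l.Nodup) (hl : l.getLast? = some a) (hb : b ∉ l) :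
    ∃ l' : List V, l'.IsChain G.Adj ∧ l'.Nodup ∧ l'.getLast? = some a ∧ ∀ v, v ∈ l' ↔ v ≠ b := by
  by_cases hfull : ∀ v, v ≠ b → v ∈ l
  · exact ⟨l, hc, hn, hl, fun v ↦ ⟨fun hv hvb ↦ hb (hvb ▸ hv), hfull v⟩⟩
  push Not at hfull
  obtain ⟨u, hub, hu⟩ := hfull
  obtain ⟨x, hxl⟩ : ∃ x, l.head? = some x := by cases l <;> simp_all
  obtain ⟨w, hw, hwb, l', hperm, hc', hl'⟩ :=
    exists_notMem_perm_isChain_cons hdeg hcard hc hn hxl hu hub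
  have hn' : (w :: l').Nodup := hperm.nodup_iff.2 hn |>.cons (hperm.mem_iff.not.2 hw)
  have := hn'.length_le_card
  have hb' : b ∉ w :: l' := by simp [hperm.mem_iff, hb, hwb.symm]
  exact exists_isChain_mem_iff_ne hdeg hcard (w :: l') hc' hn'
    (by simp [List.getLast?_cons, hl', hl]) hb'
termination_by Fintype.card V - l.length
decreasing_by simp only [List.length_cons, hperm.length_eq] at this ⊢; omega

theorem exists_isHamiltonian_of_forall_degree (hdeg : ∀ v, k ≤ G.degree v)
    (hcard : Fintype.card V + 1 ≤ 2 * k) {a b : V} (hab : a ≠ b) :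
    ∃ p : G.Walk a b, p.IsHamiltonian := by
  obtain ⟨l, hc, hn, hl, hmem⟩ := exists_isChain_mem_iff_ne hdeg hcard [a] (.singleton a)
    (List.nodup_singleton a) List.getLast?_singleton (by simpa using hab.symm)
  obtain ⟨x, hxl⟩ : ∃ x, l.head? = some x := by cases l <;> simp_all
  obtain ⟨l', hperm, hc', hl'⟩ := exists_perm_isChain_cons hc hn hxl ((hmem b).not.2 (by simp))
    (fun w _ hwb ↦ (hmem w).2 hwb) (by linarith [hdeg x, hdeg b])
  obtain ⟨p, hp⟩ := exists_walk_support_eq (v := a) hc' rfl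
    (by simp [List.getLast?_cons, hl', hl])
  have hpath : p.reverse.IsPath := by
    rw [Walk.isPath_reverse_iff, Walk.isPath_def, hp, List.nodup_cons, hperm.mem_iff, hmem,
      hperm.nodup_iff]
    exact ⟨not_not.2 rfl, hn⟩
  refine ⟨p.reverse, hpath.isHamiltonian_of_mem fun v ↦ ?_⟩
  rw [Walk.support_reverse, List.mem_reverse, hp, List.mem_cons, hperm.mem_iff, hmem]
  exact eq_or_ne v b

theorem exists_isPath_mem_support_iff_notMem (F : Finset V) (hdeg : ∀ v, k ≤ G.degree v)
    (hcard : Fintype.card V + #F + 1 ≤ 2 * k) {a b : V} (ha : a ∉ F) (hb : b ∉ F) (hab : a ≠ b) :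
    ∃ p : G.Walk a b, p.IsPath ∧ ∀ v, v ∈ p.support ↔ v ∉ F := by
  set s : Set V := {v | v ∉ F}
  have hdeg' : ∀ v : s, k - #F ≤ (G.induce s).degree v := fun v ↦ by
    have hmap := congrArg card (map_neighborFinset_induce (G := G) v)
    rw [card_map, card_neighborFinset_eq_degree] at hmap
    have hsub : G.neighborFinset v \ F ⊆ G.neighborFinset v ∩ s.toFinset := fun w ↦ by simp [s]
    have := le_card_sdiff F (G.neighborFinset v)
    rw [card_neighborFinset_eq_degree] at this
    have := card_le_card hsub
    have := hdeg v
    omega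
  have hcard' : Fintype.card s + 1 ≤ 2 * (k - #F) := by
    have : Fintype.card s = Fintype.card V - #F := by
      simp [s, Finset.filter_not, Finset.card_sdiff]
    have := card_le_univ F
    omega
  obtain ⟨p, hp⟩ := exists_isHamiltonian_of_forall_degree hdeg' hcard'
    (a := ⟨a, ha⟩) (b := ⟨b, hb⟩) (by simpa)
  obtain ⟨q, hq⟩ : ∃ q : G.Walk a b, q.support = p.support.map Subtype.val :=
    ⟨p.map (Embedding.induce s).toHom, Walk.support_map _ _⟩
  refine ⟨q, ?_, fun v ↦ ?_⟩
  · rw [Walk.isPath_def, hq]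
    exact hp.isPath.support_nodup.map Subtype.val_injective
  rw [hq, List.mem_map]
  exact ⟨fun ⟨w, _, hw⟩ ↦ hw ▸ w.2, fun hv ↦ ⟨⟨v, hv⟩, hp.mem_support _, rfl⟩⟩

lemma degree_add_degree_le_card_inter_add_card (u v : V) :
    G.degree u + G.degree v ≤ #(G.neighborFinset u ∩ G.neighborFinset v) + Fintype.card V := by
  rw [← card_neighborFinset_eq_degree, ← card_neighborFinset_eq_degree,
    ← card_union_add_card_inter, add_comm]
  exact add_le_add_right (card_le_univ (G.neighborFinset u ∪ G.neighborFinset v)) _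

lemma exists_disjoint_paths_of_length_two {ι : Type*} [Fintype ι] {a b : ι → V}
    (ha : Function.Injective a) (hb : Function.Injective b) (hab : ∀ i j, a i ≠ b j)
    (h : ∀ i, 3 * Fintype.card ι ≤ #(G.neighborFinset (a i) ∩ G.neighborFinset (b i))) :
    ∃ P : ∀ i, G.Walk (a i) (b i), (∀ i, (P i).IsPath ∧ (P i).length = 2) ∧
      ∀ i j, i ≠ j → ∀ v ∈ (P i).support, v ∉ (P j).support := by
  set A : ι → Finset V := fun i ↦
    (G.neighborFinset (a i) ∩ G.neighborFinset (b i)) \ (univ.image a ∪ univ.image b)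
  have hA : ∀ s : Finset ι, #s ≤ #(s.biUnion A) := by
    intro s
    rcases s.eq_empty_or_nonempty with rfl | ⟨i, hi⟩
    · simp
    have : _ ≤ #(A i) := le_card_sdiff (univ.image a ∪ univ.image b) _
    have := card_union_le (univ.image a) (univ.image b)
    have := card_image_le (s := univ) (f := a)
    have := card_image_le (s := univ) (f := b)
    have := card_le_card (subset_biUnion_of_mem A hi)
    have := card_le_univ s
    have := h i
    simp only [card_univ] at *
    omega
  obtain ⟨c, hc, hcA⟩ := (all_card_le_biUnion_card_iff_exists_injective A).1 hA
  simp only [A, mem_sdiff, mem_inter, mem_neighborFinset, mem_union, mem_image, mem_univ,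
    true_and, not_or, not_exists] at hcA
  have hca : ∀ i j, c i ≠ a j := fun i j h ↦ (hcA i).2.1 j h.symm
  have hcb : ∀ i j, c i ≠ b j := fun i j h ↦ (hcA i).2.2 j h.symm
  refine ⟨fun i ↦ .cons (hcA i).1.1 (.cons (hcA i).1.2.symm .nil), fun i ↦ ⟨?_, rfl⟩, ?_⟩
  · simp [hab, hcb, (hca i i).symm]
  · intro i j hij v hv
    simp only [Walk.support_cons, Walk.support_nil, List.mem_cons, List.not_mem_nil, or_false]
      at hv ⊢
    rcases hv with rfl | rfl | rfl <;>
      simp [ha.ne hij, hb.ne hij, hc.ne hij, hab, hca, hcb, (hab _ _).symm, (hca _ _).symm,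
        (hcb _ _).symm]

end Finite

theorem exists_disjoint_paths_cover_lastCases {t : ℕ} {a b : Fin (t + 1) → V}
    (P : ∀ i : Fin t, G.Walk (a i.castSucc) (b i.castSucc)) (hP : ∀ i, (P i).IsPath)
    (hPP : ∀ i j, i ≠ j → ∀ v ∈ (P i).support, v ∉ (P j).support)
    (Q : G.Walk (a (Fin.last t)) (b (Fin.last t))) (hQ : Q.IsPath)
    (hQP : ∀ v, v ∈ Q.support ↔ ∀ i, v ∉ (P i).support) :
    ∃ R : ∀ i, G.Walk (a i) (b i), (∀ i, (R i).IsPath) ∧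
      (∀ i j, i ≠ j → ∀ v : V, v ∈ (R i).support → v ∉ (R j).support) ∧
      ∀ v : V, ∃ i, v ∈ (R i).support := by
  refine ⟨Fin.lastCases Q P, fun i ↦ ?_, fun i j hij v hv ↦ ?_, fun v ↦ ?_⟩
  · cases i using Fin.lastCases <;> simp [hQ, hP]
  · cases i using Fin.lastCases <;> cases j using Fin.lastCases
    · exact absurd rfl hij
    · simp_all
    · simp only [Fin.lastCases_castSucc, Fin.lastCases_last, hQP] at hv ⊢
      exact fun h ↦ h _ hv
    · simp only [Fin.lastCases_castSucc] at hv ⊢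
      exact hPP _ _ (fun h ↦ hij (congrArg _ h)) v hv
  · by_cases hv : v ∈ Q.support
    · exact ⟨Fin.last t, by simpa⟩
    · obtain ⟨i, hi⟩ : ∃ i, v ∈ (P i).support := by simpa [hQP] using hv
      exact ⟨i.castSucc, by simpa⟩

end SimpleGraph

open SimpleGraph

/-- For every `0 < ε < 1` there is `n₀` such that for every graph `G` on `2n ≥ n₀` vertices
with `δ(G) ≥ (1+ε)n` and every matching `{a₁b₁, …, a_tb_t}` (pairwise disjoint pairs of
vertices) in the complete graph on `V(G)` of size `t ≤ εn/4`, there are vertex-disjoint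
paths `P₁, …, P_t` in `G` covering all of `V(G)` with `Pᵢ` joining `aᵢ` to `bᵢ`. -/
theorem disjoint_paths_cover :
    ∀ ε : ℝ, 0 < ε → ε < 1 →
      ∃ n₀ : ℕ, 0 < n₀ ∧
        ∀ (V : Type) [Fintype V] [DecidableEq V] (G : SimpleGraph V) [DecidableRel G.Adj]
          (n t : ℕ) (a b : Fin t → V),
          Fintype.card V = 2 * n → n₀ ≤ 2 * n →
          (1 + ε) * (n : ℝ) ≤ (G.minDegree : ℝ) →
          1 ≤ t → (t : ℝ) ≤ ε * (n : ℝ) / 4 →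
          Function.Injective a → Function.Injective b → (∀ i j, a i ≠ b j) →
          ∃ P : (i : Fin t) → G.Walk (a i) (b i),
            (∀ i, (P i).IsPath) ∧
            (∀ i j, i ≠ j → ∀ v : V, v ∈ (P i).support → v ∉ (P j).support) ∧
            (∀ v : V, ∃ i, v ∈ (P i).support) := by
  intro ε _ _
  refine ⟨1, one_pos, fun V _ _ G _ n t a b hV _ hδ ht1 ht ha hb hab ↦ ?_⟩
  have hδt : 2 * n + 8 * t ≤ 2 * G.minDegree := by
    exact_mod_cast (by linarith : (2 * n + 8 * t : ℝ) ≤ 2 * G.minDegree)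
  obtain ⟨P, hP, hPP⟩ := exists_disjoint_paths_of_length_two (G := G) ha hb hab fun i ↦ by
    have := G.degree_add_degree_le_card_inter_add_card (a i) (b i)
    have := G.minDegree_le_degree (a i)
    have := G.minDegree_le_degree (b i)
    rw [Fintype.card_fin]
    omega
  obtain ⟨t, rfl⟩ := Nat.exists_eq_add_of_le' ht1
  set F := univ.biUnion fun i : Fin t ↦ (P i.castSucc).support.toFinset
  have hF : #F ≤ 3 * t := by
    refine (card_biUnion_le_card_mul _ _ 3 fun i _ ↦ ?_).trans (by simp [mul_comm])
    exact (List.toFinset_card_le _).trans (by simp [(hP _).2])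
  have hlast : ∀ v ∈ (P (Fin.last t)).support, v ∉ F := by
    simpa [F] using fun v hv i ↦ hPP _ _ (Fin.castSucc_lt_last i).ne' v hv
  obtain ⟨Q, hQ, hQF⟩ := exists_isPath_mem_support_iff_notMem F G.minDegree_le_degree (by omega)
    (hlast _ (P _).start_mem_support) (hlast _ (P _).end_mem_support) (hab _ _)
  exact exists_disjoint_paths_cover_lastCases (fun i ↦ P i.castSucc) (fun i ↦ (hP _).1)
    (fun i j hij ↦ hPP _ _ (Fin.castSucc_injective _ |>.ne hij)) Q hQ (by simpa [F] using hQF)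
end
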